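/- Let G be a finite simple graph on n vertices and k ≥ 1 an integer. Let v_1, v_2, …, v_n be an ordering of the vertices such that for every i, the vertex v_i is contained in the minimum number of k-cliques of the induced subgraph G_i := G[{v_i, v_{i+1}, …, v_n}], among all vertices of G_i (i.e., the vertices are peeled in order of minimum k-clique count). Then max_{1 ≤ i ≤ n} c_k(G_i) / (n − i + 1) ≥ (1/k) · max_{∅ ≠ W ⊆ V} c_k(G[W]) / |W|; that is, the peeling process yields a 1/k-approximation to the k-clique densest subgraph problem. -/

import Mathlib

/-!
Let `U` be a densest nonempty subset of `W` and `v` the vertex of `U` peeled first, at step `i`,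
so that `U ⊆ S i`. Comparing `U` with `U \ {v}` shows that `v` lies in at least
`cliqueDensity G k U` of the `k`-cliques of `G[U]`, hence of `G[S i]`. As `v` has minimum
`k`-clique degree in `G[S i]` and these degrees sum to `k * cliquesIn G k (S i)`, the density of
`S i` is at least `1/k` times that of `U`, which is at least that of `W`.
-/

open Classical Finset

/-- `cliquesIn G k W` is the number of `k`-cliques of the induced subgraph `G[W]`, i.e. the
number of `k`-cliques of `G` all of whose vertices lie in `W`. -/
noncomputable def cliquesIn {V : Type*} [Fintype V] [DecidableEq V] (G : SimpleGraph V)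
    [DecidableRel G.Adj] (k : ℕ) (W : Finset V) : ℕ :=
  ((G.cliqueFinset k).filter fun s => s ⊆ W).card

/-- `kCliqueDeg G k W v` is the number of `k`-cliques of the induced subgraph `G[W]`
that contain the vertex `v`. -/
noncomputable def kCliqueDeg {V : Type*} [Fintype V] [DecidableEq V] (G : SimpleGraph V)
    [DecidableRel G.Adj] (k : ℕ) (W : Finset V) (v : V) : ℕ :=
  ((G.cliqueFinset k).filter fun s => s ⊆ W ∧ v ∈ s).card

noncomputable def cliqueDensity {V : Type*} [Fintype V] [DecidableEq V] (G : SimpleGraph V)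
    [DecidableRel G.Adj] (k : ℕ) (W : Finset V) : ℝ :=
  cliquesIn G k W / W.card

section CliqueCounts

variable {V : Type*} [Fintype V] [DecidableEq V] (G : SimpleGraph V) [DecidableRel G.Adj] (k : ℕ)

lemma sum_kCliqueDeg (W : Finset V) : ∑ u ∈ W, kCliqueDeg G k W u = k * cliquesIn G k W := by
  set B := (G.cliqueFinset k).filter fun s => s ⊆ W
  have hdeg (u : V) : kCliqueDeg G k W u = #(B.bipartiteAbove (· ∈ ·) u) := by
    rw [kCliqueDeg, bipartiteAbove, filter_filter]
  have hcard : ∀ s ∈ B, #(W.bipartiteBelow (· ∈ ·) s) = k := by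
    intro s hs
    obtain ⟨hclique, hsW⟩ := mem_filter.mp hs
    rw [bipartiteBelow, filter_mem_eq_inter, inter_eq_right.mpr hsW]
    exact (SimpleGraph.mem_cliqueFinset_iff.mp hclique).2
  simp_rw [hdeg, sum_card_bipartiteAbove_eq_sum_card_bipartiteBelow, sum_congr rfl hcard,
    sum_const, smul_eq_mul, mul_comm]
  rfl

lemma cliquesIn_eq_cliquesIn_erase_add_kCliqueDeg (W : Finset V) (v : V) :
    cliquesIn G k W = cliquesIn G k (W.erase v) + kCliqueDeg G k W v := by
  simp only [cliquesIn, kCliqueDeg, subset_erase, ← filter_filter]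
  rw [add_comm, card_filter_add_card_filter_not]

lemma cliquesIn_empty {k : ℕ} (hk : k ≠ 0) : cliquesIn G k ∅ = 0 := by
  simp only [cliquesIn, subset_empty, card_eq_zero, filter_eq_empty_iff]
  rintro s hs rfl
  exact hk (SimpleGraph.mem_cliqueFinset_iff.mp hs).2.symm

lemma kCliqueDeg_mono {W₁ W₂ : Finset V} (h : W₁ ⊆ W₂) (v : V) :
    kCliqueDeg G k W₁ v ≤ kCliqueDeg G k W₂ v :=
  card_le_card <| monotone_filter_right _ fun _ _ ⟨hs, hv⟩ ↦ ⟨hs.trans h, hv⟩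

end CliqueCounts

section Density

variable {V : Type*} [Fintype V] [DecidableEq V] (G : SimpleGraph V) [DecidableRel G.Adj] {k : ℕ}

lemma cliqueDensity_le_kCliqueDeg (hk : k ≠ 0) {U : Finset V} {v : V} (hv : v ∈ U)
    (hmax : (U.erase v).Nonempty → cliqueDensity G k (U.erase v) ≤ cliqueDensity G k U) :
    cliqueDensity G k U ≤ kCliqueDeg G k U v := by
  have hU : (0 : ℝ) < #U := by exact_mod_cast card_pos.mpr ⟨v, hv⟩
  have hsplit : (cliquesIn G k U : ℝ) = cliquesIn G k (U.erase v) + kCliqueDeg G k U v := by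
    exact_mod_cast cliquesIn_eq_cliquesIn_erase_add_kCliqueDeg G k U v
  suffices (cliquesIn G k (U.erase v) : ℝ) ≤ (#U - 1) * kCliqueDeg G k U v by
    rw [cliqueDensity, div_le_iff₀ hU, hsplit]
    linarith
  rcases (U.erase v).eq_empty_or_nonempty with hempty | hne
  · rw [hempty, cliquesIn_empty G hk, Nat.cast_zero]
    have : (1 : ℝ) ≤ #U := by exact_mod_cast card_pos.mpr ⟨v, hv⟩
    exact mul_nonneg (by linarith) (Nat.cast_nonneg _)
  · have hU' : (0 : ℝ) < #U - 1 := by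
      rw [← cast_card_erase_of_mem hv]; exact_mod_cast card_pos.mpr hne
    have := hmax hne
    rw [cliqueDensity, cliqueDensity, cast_card_erase_of_mem hv, hsplit,
      div_le_div_iff₀ hU' hU] at this
    nlinarith

lemma kCliqueDeg_le_mul_cliqueDensity {S : Finset V} {v : V} (hv : v ∈ S)
    (hmin : ∀ u ∈ S, kCliqueDeg G k S v ≤ kCliqueDeg G k S u) :
    (kCliqueDeg G k S v : ℝ) ≤ k * cliqueDensity G k S := by
  have hS : (0 : ℝ) < #S := by exact_mod_cast card_pos.mpr ⟨v, hv⟩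
  have hsum : #S * kCliqueDeg G k S v ≤ k * cliquesIn G k S :=
    sum_kCliqueDeg G k S ▸ card_nsmul_le_sum S _ _ hmin
  rw [cliqueDensity, mul_div_assoc', le_div_iff₀ hS, mul_comm]
  exact_mod_cast hsum

end Density

/-- Peeling yields a `1/k`-approximation to the `k`-clique densest subgraph problem:
enumerate the vertices as `e 0, e 1, …` so that, letting `S i` be the set of vertices with
index at least `i` (so `G[S i]` is the graph remaining before the `i`-th peeling step), the
vertex `e i` has the minimum number of `k`-cliques of `G[S i]` among all vertices of `S i`.
Then for every nonempty vertex set `W` there is a suffix `S i` whose `k`-clique density is at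
least `1/k` times the `k`-clique density of `G[W]`. -/
theorem peeling_approximation {V : Type*} [Fintype V] [DecidableEq V]
    (G : SimpleGraph V) [DecidableRel G.Adj] (k : ℕ) (hk : 1 ≤ k)
    (e : Fin (Fintype.card V) ≃ V) (S : Fin (Fintype.card V) → Finset V)
    (hS : ∀ i, S i = Finset.univ.filter fun u => (i : ℕ) ≤ ((e.symm u : Fin (Fintype.card V)) : ℕ))
    (hmin : ∀ i, ∀ u ∈ S i, kCliqueDeg G k (S i) (e i) ≤ kCliqueDeg G k (S i) u) :
    ∀ W : Finset V, W.Nonempty → ∃ i : Fin (Fintype.card V),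
      (1 / (k : ℝ)) * ((cliquesIn G k W : ℝ) / (W.card : ℝ))
        ≤ (cliquesIn G k (S i) : ℝ) / ((S i).card : ℝ) := by
  intro W hW
  obtain ⟨U, hU, hUmax⟩ := (W.powerset.filter Finset.Nonempty).exists_max_image
    (cliqueDensity G k) ⟨W, by simpa using hW⟩
  obtain ⟨hUW, hUne⟩ := by simpa only [mem_filter, mem_powerset] using hU
  obtain ⟨v, hvU, hvfirst⟩ := U.exists_min_image e.symm hUne
  have hUS : U ⊆ S (e.symm v) := fun u hu ↦ by simpa [hS] using hvfirst u hu
  have hmin_v := e.apply_symm_apply v ▸ hmin (e.symm v)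
  refine ⟨e.symm v, ?_⟩
  calc 1 / (k : ℝ) * cliqueDensity G k W
      ≤ 1 / k * cliqueDensity G k U := by
        gcongr; exact hUmax W (by simpa using hW)
    _ ≤ 1 / k * kCliqueDeg G k U v := by
        gcongr
        refine cliqueDensity_le_kCliqueDeg G (by omega) hvU fun hne ↦ hUmax _ ?_
        simpa using ⟨(erase_subset v U).trans hUW, hne⟩
    _ ≤ 1 / k * kCliqueDeg G k (S (e.symm v)) v := by
        gcongr; exact kCliqueDeg_mono G k hUS v
    _ ≤ 1 / k * (k * cliqueDensity G k (S (e.symm v))) := by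
        gcongr; exact kCliqueDeg_le_mul_cliqueDensity G (hUS hvU) hmin_v
    _ = cliqueDensity G k (S (e.symm v)) := by
        field_simp
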